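/- For every prime p and all natural integers j ≥ 1 and k ≥ 0, the congruence (jk)!/((j!)^k k!) ≡ (pjk)!/(((pj)!)^k k!) (mod p) holds. -/
import Mathlib

open Nat

lemma lucas_step (p a b : ℕ) (hp : p.Prime) :
    Nat.choose (p * a + (p - 1)) (p * b + (p - 1)) ≡ Nat.choose a b [MOD p] := by
  haveI : Fact p.Prime := ⟨hp⟩
  have h := Choose.choose_modEq_choose_mod_mul_choose_div_nat
    (n := p * a + (p - 1)) (k := p * b + (p - 1)) (p := p)
  have hplt : p - 1 < p := Nat.sub_lt hp.pos one_pos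
  have h1 : (p * a + (p - 1)) % p = p - 1 := by
    simp [Nat.add_mod, Nat.mul_mod_right, Nat.mod_eq_of_lt hplt]
  have h2 : (p * a + (p - 1)) / p = a := by
    rw [Nat.mul_add_div hp.pos, Nat.div_eq_of_lt hplt, add_zero]
  have h3 : (p * b + (p - 1)) % p = p - 1 := by
    simp [Nat.add_mod, Nat.mul_mod_right, Nat.mod_eq_of_lt hplt]
  have h4 : (p * b + (p - 1)) / p = b := by
    rw [Nat.mul_add_div hp.pos, Nat.div_eq_of_lt hplt, add_zero]
  rw [h1, h2, h3, h4, Nat.choose_self, one_mul] at h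
  exact h

lemma uniformBell_modEq (p j k : ℕ) (hp : p.Prime) (hj : 1 ≤ j) :
    Nat.uniformBell k j ≡ Nat.uniformBell k (p * j) [MOD p] := by
  induction k with
  | zero => simp [Nat.uniformBell_zero_left]; rfl
  | succ m ih =>
    rw [Nat.uniformBell_succ_left, Nat.uniformBell_succ_left]
    refine Nat.ModEq.mul ?_ ih
    have key : m * (p * j) + p * j - 1 = p * (m * j + j - 1) + (p - 1) := by
      have e : m * (p * j) + p * j = p * (m * j + j) := by ring
      have e2 : p * (m * j + j - 1) = p * (m * j + j) - p := by
        rw [Nat.mul_sub, mul_one]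
      have hge : p ≤ p * (m * j + j) := Nat.le_mul_of_pos_right p (by positivity)
      have h2 : 1 ≤ p := hp.one_le
      omega
    have key2 : p * j - 1 = p * (j - 1) + (p - 1) := by
      have e2 : p * (j - 1) = p * j - p := by rw [Nat.mul_sub, mul_one]
      have hge : p ≤ p * j := Nat.le_mul_of_pos_right p (by omega)
      have h2 : 1 ≤ p := hp.one_le
      omega
    rw [key, key2]
    exact (lucas_step p (m * j + j - 1) (j - 1) hp).symm

theorem factorial_div_modEq (p j k : ℕ) (hp : p.Prime) (hj : 1 ≤ j) :
    Nat.factorial (j * k) / (Nat.factorial j ^ k * Nat.factorial k) ≡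
      Nat.factorial (p * j * k) / (Nat.factorial (p * j) ^ k * Nat.factorial k) [MOD p] := by
  have hj0 : j ≠ 0 := by omega
  have hpj0 : p * j ≠ 0 := by
    have := hp.pos; positivity
  have e1 : Nat.factorial (j * k) / (Nat.factorial j ^ k * Nat.factorial k) =
      Nat.uniformBell k j := by
    rw [Nat.uniformBell_eq_div k hj0, mul_comm k j]
  have e2 : Nat.factorial (p * j * k) / (Nat.factorial (p * j) ^ k * Nat.factorial k) =
      Nat.uniformBell k (p * j) := by
    rw [Nat.uniformBell_eq_div k hpj0, mul_comm k (p * j)]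
  rw [e1, e2]
  exact uniformBell_modEq p j k hp hj
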